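/- Let m ≥ 0 and n ≥ 1 be integers. Let σ : Δ^{m+n} → Δ^m × Δⁿ be the nondegenerate (m+n)-simplex whose vertices, in increasing order, are (0,0), (1,0), …, (m,0), (m,1), …, (m,n), and let δ := d_{m+n}σ be its face obtained by omitting the last vertex (m,n). The set of nondegenerate simplices of Δ^m × Δⁿ other than σ and δ is closed under passing to faces, so there is a simplicial subset L ⊆ Δ^m × Δⁿ whose nondegenerate simplices are exactly those. Then σ carries the horn Λ^{m+n}_{m+n} into L, and the resulting commutative square, with vertical maps the inclusions Λ^{m+n}_{m+n} ↪ Δ^{m+n} and L ↪ Δ^m × Δⁿ and horizontal maps induced by σ, is simultaneously a pullback square and a pushout square of simplicial sets; in particular Δ^m × Δⁿ is the pushout L ⨿_{Λ^{m+n}_{m+n}} Δ^{m+n}. -/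

import Mathlib

open CategoryTheory CategoryTheory.Limits Simplicial SSet Opposite
open CategoryTheory.GrothendieckTopology

/-- `τ` is a degeneracy of the simplex `b` (allowing the identity degeneracy), i.e. `τ = b · s`
for some surjective (monotone) map `s` in the simplex category. -/
def IsDegeneracyOf {P : SSet} {k : SimplexCategoryᵒᵖ} {l : SimplexCategory}
    (τ : P.obj k) (b : P.obj (op l)) : Prop :=
  ∃ s : k.unop ⟶ l, Function.Surjective s.toOrderHom ∧ τ = P.map s.op b

/-- The map `Δ^{m+n} → Δ^m` determined on vertices by `i ↦ min i m`. -/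
def sigmaFst (m n : ℕ) : (Δ[m + n] : SSet) ⟶ Δ[m] :=
  SSet.stdSimplex.map (SimplexCategory.mkHom
    ⟨fun i => ⟨min i.val m, by omega⟩,
      fun a b hab => Fin.mk_le_mk.mpr (min_le_min hab le_rfl)⟩)

/-- The map `Δ^{m+n} → Δ^n` determined on vertices by `i ↦ i − m` (truncated subtraction). -/
def sigmaSnd (m n : ℕ) : (Δ[m + n] : SSet) ⟶ Δ[n] :=
  SSet.stdSimplex.map (SimplexCategory.mkHom
    ⟨fun i => ⟨i.val - m, by omega⟩,
      fun a b hab => Fin.mk_le_mk.mpr (Nat.sub_le_sub_right hab m)⟩)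

/-- The nondegenerate `(m+n)`-simplex `σ : Δ^{m+n} → Δ^m × Δ^n` whose vertices, in increasing
order, are `(0,0), (1,0), …, (m,0), (m,1), …, (m,n)`, as a morphism of simplicial sets. -/
noncomputable def sigmaMap (m n : ℕ) : (Δ[m + n] : SSet) ⟶ (Δ[m] ⨯ Δ[n] : SSet) :=
  prod.lift (sigmaFst m n) (sigmaSnd m n)

/-- `σ` as an `(m+n)`-simplex of `Δ^m × Δ^n`. -/
noncomputable def sigmaSimplex (m n : ℕ) : (Δ[m] ⨯ Δ[n] : SSet).obj (op (SimplexCategory.mk (m + n))) :=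
  SSet.yonedaEquiv (sigmaMap m n)

/-- `δ = d_{m+n} σ`, the face of `σ` obtained by omitting the last vertex `(m, n)`;
here the face inclusion `[m+n-1] → [m+n]` is the map `i ↦ i`. -/
noncomputable def deltaSimplex (m n : ℕ) (hn : 1 ≤ n) :
    (Δ[m] ⨯ Δ[n] : SSet).obj (op (SimplexCategory.mk (m + n - 1))) :=
  (Δ[m] ⨯ Δ[n] : SSet).map (SimplexCategory.mkHom
    ⟨Fin.castLE (by omega), fun a b hab => hab⟩ :
      (SimplexCategory.mk (m + n - 1)) ⟶ SimplexCategory.mk (m + n)).op (sigmaSimplex m n)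

namespace Stmt4Aux

universe u

variable (m n : ℕ)

/-- first component of a simplex of the product, as an order hom -/
noncomputable def fc {k : SimplexCategoryᵒᵖ} (τ : (Δ[m] ⨯ Δ[n] : SSet.{0}).obj k) :
    Fin (k.unop.len + 1) →o Fin (m + 1) :=
  SSet.stdSimplex.asOrderHom ((prod.fst : (Δ[m] ⨯ Δ[n] : SSet.{0}) ⟶ Δ[m]).app k τ)

noncomputable def gc {k : SimplexCategoryᵒᵖ} (τ : (Δ[m] ⨯ Δ[n] : SSet.{0}).obj k) :
    Fin (k.unop.len + 1) →o Fin (n + 1) :=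
  SSet.stdSimplex.asOrderHom ((prod.snd : (Δ[m] ⨯ Δ[n] : SSet.{0}) ⟶ Δ[n]).app k τ)

theorem fc_map {k k' : SimplexCategoryᵒᵖ} (θ : k ⟶ k') (τ : (Δ[m] ⨯ Δ[n] : SSet.{0}).obj k) :
    fc m n ((Δ[m] ⨯ Δ[n] : SSet.{0}).map θ τ) = (fc m n τ).comp θ.unop.toOrderHom := by
  have := NatTrans.naturality_apply (prod.fst : (Δ[m] ⨯ Δ[n] : SSet.{0}) ⟶ Δ[m]) θ τ
  unfold fc
  rw [this]
  rfl

theorem gc_map {k k' : SimplexCategoryᵒᵖ} (θ : k ⟶ k') (τ : (Δ[m] ⨯ Δ[n] : SSet.{0}).obj k) :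
    gc m n ((Δ[m] ⨯ Δ[n] : SSet.{0}).map θ τ) = (gc m n τ).comp θ.unop.toOrderHom := by
  have := NatTrans.naturality_apply (prod.snd : (Δ[m] ⨯ Δ[n] : SSet.{0}) ⟶ Δ[n]) θ τ
  unfold gc
  rw [this]
  rfl

noncomputable def pairEquiv (k : SimplexCategoryᵒᵖ) :
    (Δ[m] ⨯ Δ[n] : SSet.{0}).obj k ≃ (Δ[m].obj k) × (Δ[n].obj k) :=
  ((asIso (prodComparison ((evaluation SimplexCategoryᵒᵖ Type).obj k) Δ[m] Δ[n])) ≪≫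
    Types.binaryProductIso _ _).toEquiv

theorem pairEquiv_fst (k : SimplexCategoryᵒᵖ) (τ : (Δ[m] ⨯ Δ[n] : SSet.{0}).obj k) :
    (pairEquiv m n k τ).1 = (prod.fst : (Δ[m] ⨯ Δ[n] : SSet.{0}) ⟶ Δ[m]).app k τ := by
  have h1 := ConcreteCategory.congr_hom (Types.binaryProductIso_hom_comp_fst (Δ[m].obj k) (Δ[n].obj k))
    ((prodComparison ((evaluation SimplexCategoryᵒᵖ Type).obj k) Δ[m] Δ[n]) τ)
  have h2 := ConcreteCategory.congr_hom (prodComparison_fst ((evaluation SimplexCategoryᵒᵖ Type).obj k)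
    Δ[m] Δ[n]) τ
  simp only [types_comp_apply] at h1 h2
  exact h1.trans h2

theorem pairEquiv_snd (k : SimplexCategoryᵒᵖ) (τ : (Δ[m] ⨯ Δ[n] : SSet.{0}).obj k) :
    (pairEquiv m n k τ).2 = (prod.snd : (Δ[m] ⨯ Δ[n] : SSet.{0}) ⟶ Δ[n]).app k τ := by
  have h1 := ConcreteCategory.congr_hom (Types.binaryProductIso_hom_comp_snd (Δ[m].obj k) (Δ[n].obj k))
    ((prodComparison ((evaluation SimplexCategoryᵒᵖ Type).obj k) Δ[m] Δ[n]) τ)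
  have h2 := ConcreteCategory.congr_hom (prodComparison_snd ((evaluation SimplexCategoryᵒᵖ Type).obj k)
    Δ[m] Δ[n]) τ
  simp only [types_comp_apply] at h1 h2
  exact h1.trans h2

theorem pair_ext {k : SimplexCategoryᵒᵖ} {τ τ' : (Δ[m] ⨯ Δ[n] : SSet.{0}).obj k}
    (h1 : fc m n τ = fc m n τ') (h2 : gc m n τ = gc m n τ') : τ = τ' := by
  apply (pairEquiv m n k).injective (a₁ := τ) (a₂ := τ')
  have e1 : (pairEquiv m n k τ).1 = (pairEquiv m n k τ').1 := by
    rw [pairEquiv_fst, pairEquiv_fst]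
    apply ULift.ext
    exact SimplexCategory.Hom.ext _ _ h1
  have e2 : (pairEquiv m n k τ).2 = (pairEquiv m n k τ').2 := by
    rw [pairEquiv_snd, pairEquiv_snd]
    apply ULift.ext
    exact SimplexCategory.Hom.ext _ _ h2
  exact Prod.ext e1 e2

theorem map_sigmaSimplex {k : SimplexCategoryᵒᵖ} (s : k.unop ⟶ SimplexCategory.mk (m + n)) :
    (Δ[m] ⨯ Δ[n] : SSet.{0}).map s.op (sigmaSimplex m n) =
      (sigmaMap m n).app k (stdSimplex.objEquiv.symm s : (Δ[m + n] : SSet.{0}).obj k) := by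
  show (Δ[m] ⨯ Δ[n] : SSet.{0}).map s.op
      ((sigmaMap m n).app (op (SimplexCategory.mk (m + n))) (stdSimplex.objEquiv.symm (𝟙 _))) = _
  rw [← NatTrans.naturality_apply (sigmaMap m n)]
  have h : (Δ[m + n] : SSet.{0}).map s.op (stdSimplex.objEquiv.symm (𝟙 _)) = stdSimplex.objEquiv.symm s := by
    apply ULift.ext
    show 𝟙 _ ≫ s = s
    simp
  show (sigmaMap m n).app k ((Δ[m + n] : SSet.{0}).map s.op (stdSimplex.objEquiv.symm (𝟙 _))) = _
  rw [h]

theorem fc_sigma_app {k : SimplexCategoryᵒᵖ} (x : (Δ[m + n] : SSet.{0}).obj k)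
    (j : Fin (k.unop.len + 1)) :
    ((fc m n ((sigmaMap m n).app k x)) j).val = min ((SSet.stdSimplex.asOrderHom x) j).val m := by
  have h : (prod.fst : (Δ[m] ⨯ Δ[n] : SSet.{0}) ⟶ Δ[m]).app k ((sigmaMap m n).app k x)
      = (sigmaFst m n).app k x := by
    have := ConcreteCategory.congr_hom (congr_app (prod.lift_fst (sigmaFst m n) (sigmaSnd m n)) k) x
    exact this
  unfold fc
  rw [h]
  rfl

theorem gc_sigma_app {k : SimplexCategoryᵒᵖ} (x : (Δ[m + n] : SSet.{0}).obj k)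
    (j : Fin (k.unop.len + 1)) :
    ((gc m n ((sigmaMap m n).app k x)) j).val = ((SSet.stdSimplex.asOrderHom x) j).val - m := by
  have h : (prod.snd : (Δ[m] ⨯ Δ[n] : SSet.{0}) ⟶ Δ[n]).app k ((sigmaMap m n).app k x)
      = (sigmaSnd m n).app k x := by
    have := ConcreteCategory.congr_hom (congr_app (prod.lift_snd (sigmaFst m n) (sigmaSnd m n)) k) x
    exact this
  unfold gc
  rw [h]
  rfl

/-- `τ` lies on the staircase path: each vertex has first coordinate `m` or second `0`. -/
def OnPath {k : SimplexCategoryᵒᵖ} (τ : (Δ[m] ⨯ Δ[n] : SSet.{0}).obj k) : Prop :=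
  ∀ j, ((fc m n τ) j).val = m ∨ ((gc m n τ) j).val = 0

/-- the coordinate sums of `τ` cover `0, …, m+n-1`. -/
def NearSurj {k : SimplexCategoryᵒᵖ} (τ : (Δ[m] ⨯ Δ[n] : SSet.{0}).obj k) : Prop :=
  ∀ a : ℕ, a < m + n → ∃ j, ((fc m n τ) j).val + ((gc m n τ) j).val = a

/-- the coordinate sums of `τ` attain `m+n`. -/
def HitsTop {k : SimplexCategoryᵒᵖ} (τ : (Δ[m] ⨯ Δ[n] : SSet.{0}).obj k) : Prop :=
  ∃ j, ((fc m n τ) j).val + ((gc m n τ) j).val = m + n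

/-- Key combinatorial lemma: `OnPath ∧ NearSurj` descends from faces to cofaces. -/
theorem comb {K K' : ℕ} (f : Fin (K + 1) →o Fin (m + 1)) (g : Fin (K + 1) →o Fin (n + 1))
    (A : Fin (K' + 1) →o Fin (K + 1))
    (hp : ∀ i, (f (A i)).val = m ∨ (g (A i)).val = 0)
    (hs : ∀ a : ℕ, a < m + n → ∃ i, (f (A i)).val + (g (A i)).val = a) :
    (∀ j, (f j).val = m ∨ (g j).val = 0) ∧
      (∀ a : ℕ, a < m + n → ∃ j, (f j).val + (g j).val = a) := by
  constructor
  · intro j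
    by_contra hcon
    push_neg at hcon
    obtain ⟨h1, h2⟩ := hcon
    have hf : (f j).val < m := lt_of_le_of_ne (Nat.lt_succ_iff.mp (f j).isLt) h1
    have hg : 0 < (g j).val := Nat.pos_of_ne_zero h2
    have hgn : (g j).val ≤ n := Nat.lt_succ_iff.mp (g j).isLt
    obtain ⟨i, hi⟩ := hs ((f j).val + (g j).val) (by omega)
    rcases le_total (A i) j with hle | hle
    · have hfm : (f (A i)).val ≤ (f j).val := f.monotone hle
      rcases hp i with h | h <;> omega
    · have hgm : (g j).val ≤ (g (A i)).val := g.monotone hle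
      have hfm : (f j).val ≤ (f (A i)).val := f.monotone hle
      rcases hp i with h | h <;> omega
  · intro a ha
    obtain ⟨i, hi⟩ := hs a ha
    exact ⟨A i, hi⟩

/-- The subcomplex `L`. -/
def L : Subfunctor (Δ[m] ⨯ Δ[n] : SSet.{0}) where
  obj k := {τ | ¬(OnPath m n τ ∧ NearSurj m n τ)}
  map := by
    intro k k' θ τ hτ hcon
    apply hτ
    obtain ⟨h1, h2⟩ := hcon
    simp only [OnPath, NearSurj, fc_map, gc_map] at h1 h2
    exact comb m n (fc m n τ) (gc m n τ) θ.unop.toOrderHom h1 h2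

theorem fc_map_sigma {k : SimplexCategoryᵒᵖ} (s : k.unop ⟶ SimplexCategory.mk (m + n))
    (j : Fin (k.unop.len + 1)) :
    ((fc m n ((Δ[m] ⨯ Δ[n] : SSet.{0}).map s.op (sigmaSimplex m n))) j).val
      = min (s.toOrderHom j).val m := by
  rw [map_sigmaSimplex, fc_sigma_app]
  rfl

theorem gc_map_sigma {k : SimplexCategoryᵒᵖ} (s : k.unop ⟶ SimplexCategory.mk (m + n))
    (j : Fin (k.unop.len + 1)) :
    ((gc m n ((Δ[m] ⨯ Δ[n] : SSet.{0}).map s.op (sigmaSimplex m n))) j).val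
      = (s.toOrderHom j).val - m := by
  rw [map_sigmaSimplex, gc_sigma_app]
  rfl

/-- from the data `OnPath`, the sum map as a morphism in the simplex category -/
noncomputable def sumHom {k : SimplexCategoryᵒᵖ} (τ : (Δ[m] ⨯ Δ[n] : SSet.{0}).obj k) :
    k.unop ⟶ SimplexCategory.mk (m + n) :=
  SimplexCategory.Hom.mk
    ⟨fun j => ⟨((fc m n τ) j).val + ((gc m n τ) j).val, by
        have h1 := ((fc m n τ) j).isLt
        have h2 := ((gc m n τ) j).isLt
        simpa using by omega⟩,
      fun a b hab => by
        have h1 := (fc m n τ).monotone hab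
        have h2 := (gc m n τ).monotone hab
        exact Fin.mk_le_mk.mpr (Nat.add_le_add h1 h2)⟩

theorem eq_map_sumHom {k : SimplexCategoryᵒᵖ} (τ : (Δ[m] ⨯ Δ[n] : SSet.{0}).obj k)
    (hp : OnPath m n τ) :
    τ = (Δ[m] ⨯ Δ[n] : SSet.{0}).map (sumHom m n τ).op (sigmaSimplex m n) := by
  have hfle : ∀ j, ((fc m n τ) j).val ≤ m := fun j => Nat.lt_succ_iff.mp ((fc m n τ) j).isLt
  have hgle : ∀ j, ((gc m n τ) j).val ≤ n := fun j => Nat.lt_succ_iff.mp ((gc m n τ) j).isLt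
  refine (pair_ext m n ?_ ?_).symm
  · ext j
    rw [fc_map_sigma]
    show min (((fc m n τ) j).val + ((gc m n τ) j).val) m = ((fc m n τ) j).val
    rcases hp j with h | h
    · have := hfle j; omega
    · have := hfle j; omega
  · ext j
    rw [gc_map_sigma]
    show (((fc m n τ) j).val + ((gc m n τ) j).val) - m = ((gc m n τ) j).val
    rcases hp j with h | h
    · omega
    · have := hfle j; omega

theorem isDeg_sigma_iff {k : SimplexCategoryᵒᵖ} (τ : (Δ[m] ⨯ Δ[n] : SSet.{0}).obj k) :
    IsDegeneracyOf τ (sigmaSimplex m n) ↔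
      OnPath m n τ ∧ NearSurj m n τ ∧ HitsTop m n τ := by
  constructor
  · rintro ⟨s, hs, rfl⟩
    refine ⟨?_, ?_, ?_⟩
    · intro j
      rw [fc_map_sigma, gc_map_sigma]
      have := (s.toOrderHom j).isLt
      simp only [SimplexCategory.len_mk] at this
      omega
    · intro a ha
      obtain ⟨j, hj⟩ := hs ⟨a, by simpa using by omega⟩
      refine ⟨j, ?_⟩
      rw [fc_map_sigma, gc_map_sigma, hj]
      show min a m + (a - m) = a
      omega
    · obtain ⟨j, hj⟩ := hs ⟨m + n, by simpa using by omega⟩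
      refine ⟨j, ?_⟩
      rw [fc_map_sigma, gc_map_sigma, hj]
      show min (m + n) m + (m + n - m) = m + n
      omega
  · rintro ⟨hp, hns, j0, hj0⟩
    refine ⟨sumHom m n τ, ?_, eq_map_sumHom m n τ hp⟩
    intro a
    rcases Nat.lt_or_ge a.val (m + n) with ha | ha
    · obtain ⟨j, hj⟩ := hns a.val ha
      exact ⟨j, Fin.ext hj⟩
    · have hav : a.val = m + n := by
        have := a.isLt
        simp only [SimplexCategory.len_mk] at this
        omega
      exact ⟨j0, Fin.ext (hj0.trans hav.symm)⟩

/-- the face inclusion `[m+n-1] ⟶ [m+n]`. -/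
def dHom : SimplexCategory.mk (m + n - 1) ⟶ SimplexCategory.mk (m + n) :=
  SimplexCategory.mkHom ⟨Fin.castLE (by omega), fun a b hab => hab⟩

theorem map_delta (hn : 1 ≤ n) {k : SimplexCategoryᵒᵖ}
    (s : k.unop ⟶ SimplexCategory.mk (m + n - 1)) :
    (Δ[m] ⨯ Δ[n] : SSet.{0}).map s.op (deltaSimplex m n hn) =
      (Δ[m] ⨯ Δ[n] : SSet.{0}).map (s ≫ dHom m n).op (sigmaSimplex m n) := by
  show (Δ[m] ⨯ Δ[n] : SSet.{0}).map s.op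
    ((Δ[m] ⨯ Δ[n] : SSet.{0}).map (dHom m n).op (sigmaSimplex m n)) = _
  rw [← Functor.map_comp_apply, ← op_comp]

/-- the sum map with target `[m+n-1]`, given that the top value is avoided. -/
noncomputable def sumHom' {k : SimplexCategoryᵒᵖ} (τ : (Δ[m] ⨯ Δ[n] : SSet.{0}).obj k)
    (hnt : ∀ j, ((fc m n τ) j).val + ((gc m n τ) j).val ≠ m + n) :
    k.unop ⟶ SimplexCategory.mk (m + n - 1) :=
  SimplexCategory.Hom.mk
    ⟨fun j => ⟨((fc m n τ) j).val + ((gc m n τ) j).val, by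
        have h1 := Nat.lt_succ_iff.mp ((fc m n τ) j).isLt
        have h2 := Nat.lt_succ_iff.mp ((gc m n τ) j).isLt
        have h3 := hnt j
        simpa using by omega⟩,
      fun a b hab => by
        have h1 := (fc m n τ).monotone hab
        have h2 := (gc m n τ).monotone hab
        exact Fin.mk_le_mk.mpr (Nat.add_le_add h1 h2)⟩

theorem sumHom'_comp_d {k : SimplexCategoryᵒᵖ} (τ : (Δ[m] ⨯ Δ[n] : SSet.{0}).obj k)
    (hnt : ∀ j, ((fc m n τ) j).val + ((gc m n τ) j).val ≠ m + n) :
    sumHom' m n τ hnt ≫ dHom m n = sumHom m n τ := by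
  apply SimplexCategory.Hom.ext
  rfl

theorem isDeg_delta_iff (hn : 1 ≤ n) {k : SimplexCategoryᵒᵖ}
    (τ : (Δ[m] ⨯ Δ[n] : SSet.{0}).obj k) :
    IsDegeneracyOf τ (deltaSimplex m n hn) ↔
      OnPath m n τ ∧ NearSurj m n τ ∧ ¬ HitsTop m n τ := by
  constructor
  · rintro ⟨s, hs, rfl⟩
    rw [map_delta]
    have hval : ∀ j, (((s ≫ dHom m n).toOrderHom) j).val = ((s.toOrderHom) j).val :=
      fun j => rfl
    have hlt : ∀ j, ((s.toOrderHom) j).val < m + n - 1 + 1 := fun j => by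
      have := ((s.toOrderHom) j).isLt
      simpa using this
    refine ⟨?_, ?_, ?_⟩
    · intro j
      rw [fc_map_sigma, gc_map_sigma, hval]
      have := hlt j
      omega
    · intro a ha
      obtain ⟨j, hj⟩ := hs ⟨a, by simpa using by omega⟩
      refine ⟨j, ?_⟩
      have hjv : ((s.toOrderHom) j).val = a := by
        simpa using congrArg Fin.val hj
      rw [fc_map_sigma, gc_map_sigma, hval, hjv]
      omega
    · rintro ⟨j, hj⟩
      rw [fc_map_sigma, gc_map_sigma, hval] at hj
      have := hlt j
      omega
  · rintro ⟨hp, hns, hnt⟩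
    rw [HitsTop] at hnt
    push_neg at hnt
    refine ⟨sumHom' m n τ hnt, ?_, ?_⟩
    · intro a
      have ha : a.val < m + n - 1 + 1 := by simpa using a.isLt
      obtain ⟨j, hj⟩ := hns a.val (by omega)
      exact ⟨j, Fin.ext hj⟩
    · rw [map_delta, sumHom'_comp_d]
      exact eq_map_sumHom m n τ hp

theorem mem_L_iff (hn : 1 ≤ n) {k : SimplexCategoryᵒᵖ} (τ : (Δ[m] ⨯ Δ[n] : SSet.{0}).obj k) :
    τ ∈ (L m n).obj k ↔
      (¬ IsDegeneracyOf τ (sigmaSimplex m n) ∧ ¬ IsDegeneracyOf τ (deltaSimplex m n hn)) := by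
  show ¬(OnPath m n τ ∧ NearSurj m n τ) ↔ _
  constructor
  · intro h
    constructor
    · intro hd
      rw [isDeg_sigma_iff] at hd
      exact h ⟨hd.1, hd.2.1⟩
    · intro hd
      rw [isDeg_delta_iff] at hd
      exact h ⟨hd.1, hd.2.1⟩
  · rintro ⟨h1, h2⟩ ⟨hp, hns⟩
    by_cases ht : HitsTop m n τ
    · exact h1 ((isDeg_sigma_iff m n τ).mpr ⟨hp, hns, ht⟩)
    · exact h2 ((isDeg_delta_iff m n hn τ).mpr ⟨hp, hns, ht⟩)

theorem horn_prop_iff {k : SimplexCategoryᵒᵖ} (x : (Δ[m + n] : SSet.{0}).obj k) :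
    (Set.range (SSet.stdSimplex.asOrderHom x) ∪ {Fin.last (m + n)} ≠ Set.univ) ↔
      ∃ a : ℕ, a < m + n ∧ ∀ j, ((SSet.stdSimplex.asOrderHom x) j).val ≠ a := by
  rw [Set.ne_univ_iff_exists_notMem]
  constructor
  · rintro ⟨b, hb⟩
    simp only [Set.mem_union, Set.mem_range, Set.mem_singleton_iff, not_or, not_exists] at hb
    obtain ⟨hb1, hb2⟩ := hb
    refine ⟨b.val, Fin.val_lt_last hb2, fun j hj => hb1 j (Fin.ext hj)⟩
  · rintro ⟨a, ha, hj⟩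
    refine ⟨⟨a, by omega⟩, ?_⟩
    simp only [Set.mem_union, Set.mem_range, Set.mem_singleton_iff, not_or, not_exists]
    constructor
    · intro j hj'
      exact hj j (by simpa using congrArg Fin.val hj')
    · intro hcon
      have := congrArg Fin.val hcon
      simp [Fin.last] at this
      omega

theorem sigma_app_onPath {k : SimplexCategoryᵒᵖ} (x : (Δ[m + n] : SSet.{0}).obj k) :
    OnPath m n ((sigmaMap m n).app k x) := by
  intro j
  rw [fc_sigma_app, gc_sigma_app]
  omega

theorem sigma_app_mem_L_iff {k : SimplexCategoryᵒᵖ} (x : (Δ[m + n] : SSet.{0}).obj k) :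
    (sigmaMap m n).app k x ∈ (L m n).obj k ↔
      ∃ a : ℕ, a < m + n ∧ ∀ j, ((SSet.stdSimplex.asOrderHom x) j).val ≠ a := by
  show ¬(OnPath m n _ ∧ NearSurj m n _) ↔ _
  have hsum : ∀ j, ((fc m n ((sigmaMap m n).app k x)) j).val
      + ((gc m n ((sigmaMap m n).app k x)) j).val = ((SSet.stdSimplex.asOrderHom x) j).val := by
    intro j
    rw [fc_sigma_app, gc_sigma_app]
    omega
  constructor
  · intro h
    have hns : ¬ NearSurj m n ((sigmaMap m n).app k x) := by
      intro hns
      exact h ⟨sigma_app_onPath m n x, hns⟩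
    rw [NearSurj] at hns
    push_neg at hns
    obtain ⟨a, ha, hj⟩ := hns
    exact ⟨a, ha, fun j => by rw [← hsum j]; exact hj j⟩
  · rintro ⟨a, ha, hj⟩ ⟨_, hns⟩
    obtain ⟨j, hj'⟩ := hns a ha
    exact hj j (by rw [← hsum j]; exact hj')

theorem sigma_app_injective (k : SimplexCategoryᵒᵖ) :
    Function.Injective ((sigmaMap m n).app k) := by
  intro x y h
  apply ULift.ext
  apply SimplexCategory.Hom.ext
  ext j
  have h1 : ((fc m n ((sigmaMap m n).app k x)) j).val
      = ((fc m n ((sigmaMap m n).app k y)) j).val := by rw [h]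
  have h2 : ((gc m n ((sigmaMap m n).app k x)) j).val
      = ((gc m n ((sigmaMap m n).app k y)) j).val := by rw [h]
  rw [fc_sigma_app, fc_sigma_app] at h1
  rw [gc_sigma_app, gc_sigma_app] at h2
  show ((SSet.stdSimplex.asOrderHom x) j).val = ((SSet.stdSimplex.asOrderHom y) j).val
  omega

theorem not_mem_L_covered {k : SimplexCategoryᵒᵖ} (τ : (Δ[m] ⨯ Δ[n] : SSet.{0}).obj k)
    (h : τ ∉ (L m n).obj k) :
    (sigmaMap m n).app k (stdSimplex.objEquiv.symm (sumHom m n τ)) = τ := by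
  have hmem : OnPath m n τ ∧ NearSurj m n τ := by
    by_contra hcon
    exact h hcon
  rw [← map_sigmaSimplex]
  exact (eq_map_sumHom m n τ hmem.1).symm

/-- The restriction of `σ` to the horn, landing in `L`. -/
noncomputable def tMap : (Λ[m + n, Fin.last (m + n)] : SSet.{0}) ⟶ (L m n).toFunctor where
  app k := TypeCat.ofHom fun x => ⟨(sigmaMap m n).app k x.1,
    (sigma_app_mem_L_iff m n x.1).mpr ((horn_prop_iff m n x.1).mp x.2)⟩
  naturality k k' θ := by
    refine ConcreteCategory.hom_ext _ _ fun x => ?_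
    apply Subtype.ext
    show (sigmaMap m n).app k' ((Δ[m + n] : SSet.{0}).map θ x.1)
      = (Δ[m] ⨯ Δ[n] : SSet.{0}).map θ ((sigmaMap m n).app k x.1)
    rw [NatTrans.naturality_apply]

theorem comm_w : tMap m n ≫ (L m n).ι
    = (Λ[m + n, Fin.last (m + n)]).ι ≫ sigmaMap m n := by
  apply SSet.hom_ext
  intro k
  refine ConcreteCategory.hom_ext _ _ fun x => ?_
  rfl

theorem isPullback : IsPullback (tMap m n) ((Λ[m + n, Fin.last (m + n)]).ι)
    (L m n).ι (sigmaMap m n) := by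
  refine IsPullback.of_isLimit' ⟨comm_w m n⟩ ?_
  refine PullbackCone.IsLimit.mk _ ?_ ?_ ?_ ?_
  · -- lift
    intro s
    refine { app := fun k => TypeCat.ofHom fun y => ⟨s.snd.app k y, ?_⟩, naturality := ?_ }
    · -- horn membership
      apply (horn_prop_iff m n _).mpr
      apply (sigma_app_mem_L_iff m n _).mp
      have hc := ConcreteCategory.congr_hom (congr_app s.condition k) y
      have : (sigmaMap m n).app k (s.snd.app k y) = ((s.fst.app k y) : (Δ[m] ⨯ Δ[n] : SSet.{0}).obj k) :=
        (hc).symm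
      rw [this]
      exact (s.fst.app k y).2
    · intro k k' θ
      refine ConcreteCategory.hom_ext _ _ fun y => ?_
      apply Subtype.ext
      show s.snd.app k' (s.pt.map θ y) = (Δ[m + n] : SSet.{0}).map θ (s.snd.app k y)
      rw [NatTrans.naturality_apply]
  · -- fac left
    intro s
    apply SSet.hom_ext
    intro k
    refine ConcreteCategory.hom_ext _ _ fun y => ?_
    apply Subtype.ext
    show (sigmaMap m n).app k (s.snd.app k y) = ((s.fst.app k y) : (Δ[m] ⨯ Δ[n] : SSet.{0}).obj k)
    exact (ConcreteCategory.congr_hom (congr_app s.condition k) y).symm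
  · -- fac right
    intro s
    apply SSet.hom_ext
    intro k
    refine ConcreteCategory.hom_ext _ _ fun y => ?_
    rfl
  · -- uniq
    intro s r hr1 hr2
    apply SSet.hom_ext
    intro k
    refine ConcreteCategory.hom_ext _ _ fun y => ?_
    apply Subtype.ext
    exact ConcreteCategory.congr_hom (congr_app hr2 k) y

section Desc

variable {Y : SSet.{0}} (inl : (L m n).toFunctor ⟶ Y) (inr : (Δ[m + n] : SSet.{0}) ⟶ Y)

open Classical in
noncomputable def descApp (k : SimplexCategoryᵒᵖ) (τ : (Δ[m] ⨯ Δ[n] : SSet.{0}).obj k) :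
    Y.obj k :=
  if h : ∃ x, (sigmaMap m n).app k x = τ then inr.app k h.choose
  else inl.app k ⟨τ, by
    by_contra hL
    exact h ⟨stdSimplex.objEquiv.symm (sumHom m n τ), not_mem_L_covered m n τ hL⟩⟩

theorem descApp_sigma (k : SimplexCategoryᵒᵖ) (x : (Δ[m + n] : SSet.{0}).obj k) :
    descApp m n inl inr k ((sigmaMap m n).app k x) = inr.app k x := by
  have h : ∃ x', (sigmaMap m n).app k x' = (sigmaMap m n).app k x := ⟨x, rfl⟩
  rw [descApp, dif_pos h]
  exact congrArg (inr.app k) (sigma_app_injective m n k h.choose_spec)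

theorem descApp_mem
    (hcond : tMap m n ≫ inl = (Λ[m + n, Fin.last (m + n)]).ι ≫ inr)
    (k : SimplexCategoryᵒᵖ) (τ : (Δ[m] ⨯ Δ[n] : SSet.{0}).obj k) (hτ : τ ∈ (L m n).obj k) :
    descApp m n inl inr k τ = inl.app k ⟨τ, hτ⟩ := by
  rw [descApp]
  split_ifs with h
  · have hc : (sigmaMap m n).app k h.choose = τ := h.choose_spec
    have hmem : Set.range (SSet.stdSimplex.asOrderHom h.choose) ∪ {Fin.last (m + n)} ≠ Set.univ :=
      (horn_prop_iff m n h.choose).mpr ((sigma_app_mem_L_iff m n h.choose).mp (by rw [hc]; exact hτ))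
    have happ := ConcreteCategory.congr_hom (congr_app hcond k) (⟨h.choose, hmem⟩ :
      (Λ[m + n, Fin.last (m + n)] : SSet.{0}).obj k)
    have he : ((tMap m n).app k ⟨h.choose, hmem⟩) = (⟨τ, hτ⟩ : (L m n).toFunctor.obj k) :=
      Subtype.ext hc
    exact happ.symm.trans (congrArg (inl.app k) he)
  · rfl

theorem descApp_natural
    (hcond : tMap m n ≫ inl = (Λ[m + n, Fin.last (m + n)]).ι ≫ inr)
    {k k' : SimplexCategoryᵒᵖ} (θ : k ⟶ k') (τ : (Δ[m] ⨯ Δ[n] : SSet.{0}).obj k) :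
    descApp m n inl inr k' ((Δ[m] ⨯ Δ[n] : SSet.{0}).map θ τ)
      = Y.map θ (descApp m n inl inr k τ) := by
  by_cases h : ∃ x, (sigmaMap m n).app k x = τ
  · obtain ⟨x, rfl⟩ := h
    rw [descApp_sigma]
    have hn : (Δ[m] ⨯ Δ[n] : SSet.{0}).map θ ((sigmaMap m n).app k x)
        = (sigmaMap m n).app k' ((Δ[m + n] : SSet.{0}).map θ x) :=
      (NatTrans.naturality_apply (sigmaMap m n) θ x).symm
    rw [hn, descApp_sigma]
    exact NatTrans.naturality_apply inr θ x
  · have hτ : τ ∈ (L m n).obj k := by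
      by_contra hL
      exact h ⟨stdSimplex.objEquiv.symm (sumHom m n τ), not_mem_L_covered m n τ hL⟩
    have hτ' : (Δ[m] ⨯ Δ[n] : SSet.{0}).map θ τ ∈ (L m n).obj k' := (L m n).map θ hτ
    rw [descApp_mem m n inl inr hcond _ _ hτ', descApp_mem m n inl inr hcond _ _ hτ]
    exact NatTrans.naturality_apply inl θ ⟨τ, hτ⟩

end Desc

theorem isPushout : IsPushout (tMap m n) ((Λ[m + n, Fin.last (m + n)]).ι)
    (L m n).ι (sigmaMap m n) := by
  refine IsPushout.of_isColimit' ⟨comm_w m n⟩ ?_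
  refine PushoutCocone.IsColimit.mk _ ?_ ?_ ?_ ?_
  · -- desc
    intro s
    exact { app := fun k => TypeCat.ofHom fun τ => descApp m n s.inl s.inr k τ,
            naturality := fun k k' θ => ConcreteCategory.hom_ext _ _ fun τ =>
              descApp_natural m n s.inl s.inr s.condition θ τ }
  · -- fac left : L.ι ≫ desc = s.inl
    intro s
    apply SSet.hom_ext
    intro k
    refine ConcreteCategory.hom_ext _ _ fun y => ?_
    show descApp m n s.inl s.inr k y.1 = s.inl.app k y
    rw [descApp_mem m n s.inl s.inr s.condition k y.1 y.2]
    exact congrArg (s.inl.app k) (Subtype.ext rfl)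
  · -- fac right : sigmaMap ≫ desc = s.inr
    intro s
    apply SSet.hom_ext
    intro k
    refine ConcreteCategory.hom_ext _ _ fun x => ?_
    exact descApp_sigma m n s.inl s.inr k x
  · -- uniq
    intro s r hr1 hr2
    apply SSet.hom_ext
    intro k
    refine ConcreteCategory.hom_ext _ _ fun τ => ?_
    show r.app k τ = descApp m n s.inl s.inr k τ
    by_cases h : ∃ x, (sigmaMap m n).app k x = τ
    · obtain ⟨x, rfl⟩ := h
      rw [descApp_sigma]
      exact ConcreteCategory.congr_hom (congr_app hr2 k) x
    · have hτ : τ ∈ (L m n).obj k := by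
        by_contra hL
        exact h ⟨stdSimplex.objEquiv.symm (sumHom m n τ), not_mem_L_covered m n τ hL⟩
      rw [descApp_mem m n s.inl s.inr s.condition k τ hτ]
      exact ConcreteCategory.congr_hom (congr_app hr1 k) ⟨τ, hτ⟩

end Stmt4Aux

/-- Let `m ≥ 0` and `n ≥ 1`.  Let `σ : Δ^{m+n} → Δ^m × Δ^n` be the
nondegenerate `(m+n)`-simplex with vertices `(0,0), …, (m,0), (m,1), …, (m,n)` and let
`δ = d_{m+n}σ` be its last face.  The nondegenerate simplices of `Δ^m × Δ^n` other than `σ`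
and `δ` are closed under passing to faces, so there is a simplicial subset `L ⊆ Δ^m × Δ^n`
whose nondegenerate simplices are exactly those (equivalently: a simplex belongs to `L` iff
it is not a degeneracy of `σ` nor of `δ`).  Then `σ` carries the horn `Λ^{m+n}_{m+n}` into
`L`, and the resulting commutative square (with vertical maps the inclusions
`Λ^{m+n}_{m+n} ↪ Δ^{m+n}` and `L ↪ Δ^m × Δ^n`, horizontal maps induced by `σ`) is
simultaneously a pullback square and a pushout square of simplicial sets; in particular
`Δ^m × Δ^n` is the pushout `L ⨿_{Λ^{m+n}_{m+n}} Δ^{m+n}`. -/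
theorem stmt4 (m n : ℕ) (hn : 1 ≤ n) :
    ∃ (L : Subfunctor (Δ[m] ⨯ Δ[n] : SSet))
      (t : (Λ[m + n, Fin.last (m + n)] : SSet) ⟶ L.toFunctor),
      (∀ (k : SimplexCategoryᵒᵖ) (τ : (Δ[m] ⨯ Δ[n] : SSet).obj k),
        τ ∈ L.obj k ↔
          (¬ IsDegeneracyOf τ (sigmaSimplex m n) ∧ ¬ IsDegeneracyOf τ (deltaSimplex m n hn))) ∧
      IsPullback t ((Λ[m + n, Fin.last (m + n)]).ι) L.ι (sigmaMap m n) ∧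
      IsPushout t ((Λ[m + n, Fin.last (m + n)]).ι) L.ι (sigmaMap m n) := by
  exact ⟨Stmt4Aux.L m n, Stmt4Aux.tMap m n,
    fun k τ => Stmt4Aux.mem_L_iff m n hn τ,
    Stmt4Aux.isPullback m n, Stmt4Aux.isPushout m n⟩
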